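/- In a finite-horizon MDP, let π and π* be stochastic policies with ρ₀(s) > 0, P(s'|s,a) > 0, π(a|s) > 0 and π*(a|s) > 0 for all s, s', a. Then the reverse KL divergence between trajectory distributions is upper bounded by the expected density-ratio excess: ∑_τ ρ_π(τ)·log(ρ_π(τ)/ρ_{π*}(τ)) ≤ T · ∑_{s∈S} ρ_π(s) · ∑_{a∈A} π(a|s)·( π(a|s)/π*(a|s) − 1 ). -/

import Mathlib

noncomputable section

/-- Time-`t` state distribution of a policy `π` in a finite MDP:
`ρ_π^0 = ρ₀` and `ρ_π^{t+1}(s) = ∑_{s',a} ρ_π^t(s') · π(a|s') · P(s|s',a)`. -/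
def stateDist {S A : Type*} [Fintype S] [Fintype A]
    (ρ₀ : S → ℝ) (P : S → A → S → ℝ) (π : S → A → ℝ) : ℕ → S → ℝ
  | 0 => ρ₀
  | t + 1 => fun s => ∑ s' : S, ∑ a : A, stateDist ρ₀ P π t s' * π s' a * P s' a s

/-- Average state distribution `ρ_π(s) = (1/T) ∑_{t=1}^T ρ_π^{t-1}(s)`. -/
def avgStateDist {S A : Type*} [Fintype S] [Fintype A]
    (ρ₀ : S → ℝ) (P : S → A → S → ℝ) (π : S → A → ℝ) (T : ℕ) (s : S) : ℝ :=
  (1 / (T : ℝ)) * ∑ t ∈ Finset.range T, stateDist ρ₀ P π t s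

/-- The state `s_{t-1}` preceding the `t`-th action in the trajectory
`τ = (s₀, a₁, s₁, …, a_T, s_T)`, encoded as `τ = (s₀, fun t => (a_{t+1}, s_{t+1}))`. -/
def prevState {S A : Type*} {T : ℕ} (τ : S × (Fin T → A × S)) (t : Fin T) : S :=
  if _h : (t : ℕ) = 0 then τ.1
  else (τ.2 ⟨(t : ℕ) - 1, lt_of_le_of_lt (Nat.pred_le _) t.isLt⟩).2

/-- Probability of a trajectory `τ = (s₀, a₁, s₁, …, a_T, s_T)` induced by policy `π`:
`ρ_π(τ) = ρ₀(s₀) ∏_{t=1}^T π(a_t|s_{t-1}) P(s_t|s_{t-1},a_t)`. -/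
def trajProb {S A : Type*} {T : ℕ}
    (ρ₀ : S → ℝ) (P : S → A → S → ℝ) (π : S → A → ℝ) (τ : S × (Fin T → A × S)) : ℝ :=
  ρ₀ τ.1 * ∏ t : Fin T,
    (π (prevState τ t) (τ.2 t).1 * P (prevState τ t) (τ.2 t).1 (τ.2 t).2)


section AuxRKL
set_option linter.unusedSectionVars false
variable {S A : Type*} [Fintype S] [Fintype A]

def lastState {T : ℕ} (τ : S × (Fin T → A × S)) : S :=
  if _h : T = 0 then τ.1 else (τ.2 ⟨T - 1, by omega⟩).2

def extendTraj {T : ℕ} (τ : S × (Fin T → A × S)) (p : A × S) :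
    S × (Fin (T + 1) → A × S) :=
  (τ.1, Fin.snoc τ.2 p)

lemma prevState_extend_castSucc {T : ℕ} (τ : S × (Fin T → A × S)) (p : A × S) (t : Fin T) :
    prevState (extendTraj τ p) (Fin.castSucc t) = prevState τ t := by
  rcases Nat.eq_zero_or_pos (t : ℕ) with h | h
  · simp [prevState, extendTraj, h]
  · have ht : (t : ℕ) - 1 < T := by omega
    simp only [prevState, extendTraj, Fin.coe_castSucc, dif_neg (by omega : ¬((t : ℕ) = 0))]
    rw [show (⟨(t : ℕ) - 1, by omega⟩ : Fin (T + 1)) = Fin.castSucc ⟨(t : ℕ) - 1, ht⟩ from rfl,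
      Fin.snoc_castSucc]

lemma prevState_extend_last {T : ℕ} (τ : S × (Fin T → A × S)) (p : A × S) :
    prevState (extendTraj τ p) (Fin.last T) = lastState τ := by
  rcases Nat.eq_zero_or_pos T with h | h
  · subst h
    simp [prevState, extendTraj, lastState, Fin.last]
  · have hT1 : T - 1 < T := by omega
    simp only [prevState, extendTraj, lastState, Fin.val_last,
      dif_neg (by omega : ¬(T = 0))]
    rw [show (⟨T - 1, by omega⟩ : Fin (T + 1)) = Fin.castSucc ⟨T - 1, hT1⟩ from rfl,
      Fin.snoc_castSucc]

lemma lastState_extend {T : ℕ} (τ : S × (Fin T → A × S)) (p : A × S) :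
    lastState (extendTraj τ p) = p.2 := by
  simp only [lastState, extendTraj, dif_neg (Nat.succ_ne_zero T)]
  rw [show (⟨T + 1 - 1, by omega⟩ : Fin (T + 1)) = Fin.last T from rfl, Fin.snoc_last]

lemma trajProb_extend (ρ₀ : S → ℝ) (P : S → A → S → ℝ) (π : S → A → ℝ)
    {T : ℕ} (τ : S × (Fin T → A × S)) (p : A × S) :
    trajProb ρ₀ P π (extendTraj τ p) =
      trajProb ρ₀ P π τ * (π (lastState τ) p.1 * P (lastState τ) p.1 p.2) := by
  have h2 : ∀ t : Fin T, (extendTraj τ p).2 (Fin.castSucc t) = τ.2 t := fun t => by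
    simp [extendTraj]
  have h3 : (extendTraj τ p).2 (Fin.last T) = p := by simp [extendTraj]
  unfold trajProb
  rw [Fin.prod_univ_castSucc]
  simp only [h2, h3, prevState_extend_castSucc, prevState_extend_last]
  show ρ₀ τ.1 * _ = _
  ring

lemma sum_traj_succ {T : ℕ} (F : (S × (Fin (T + 1) → A × S)) → ℝ) :
    ∑ τ : S × (Fin (T + 1) → A × S), F τ
      = ∑ τ : S × (Fin T → A × S), ∑ p : A × S, F (extendTraj τ p) := by
  rw [Fintype.sum_prod_type, Fintype.sum_prod_type]
  refine Finset.sum_congr rfl fun s₀ _ => ?_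
  rw [← (Fin.snocEquiv (fun _ : Fin (T + 1) => A × S)).sum_comp (fun g => F (s₀, g))]
  rw [Fintype.sum_prod_type, Finset.sum_comm]
  rfl

lemma sum_traj_lastState (ρ₀ : S → ℝ) (P : S → A → S → ℝ) (π : S → A → ℝ) :
    ∀ (T : ℕ) (f : S → ℝ),
      ∑ τ : S × (Fin T → A × S), trajProb ρ₀ P π τ * f (lastState τ)
        = ∑ s : S, stateDist ρ₀ P π T s * f s
  | 0, f => by
      rw [Fintype.sum_prod_type]
      simp [trajProb, lastState, stateDist]
  | T + 1, f => by
      rw [sum_traj_succ]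
      have IH := sum_traj_lastState ρ₀ P π T
        (fun s' => ∑ p : A × S, π s' p.1 * P s' p.1 p.2 * f p.2)
      calc ∑ τ : S × (Fin T → A × S), ∑ p : A × S,
              trajProb ρ₀ P π (extendTraj τ p) * f (lastState (extendTraj τ p))
          = ∑ τ : S × (Fin T → A × S), trajProb ρ₀ P π τ *
              ∑ p : A × S, π (lastState τ) p.1 * P (lastState τ) p.1 p.2 * f p.2 := by
            refine Finset.sum_congr rfl fun τ _ => ?_
            rw [Finset.mul_sum]
            refine Finset.sum_congr rfl fun p _ => ?_
            rw [trajProb_extend, lastState_extend]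
            ring
        _ = ∑ s' : S, stateDist ρ₀ P π T s' *
              ∑ p : A × S, π s' p.1 * P s' p.1 p.2 * f p.2 := IH
        _ = ∑ s : S, stateDist ρ₀ P π (T + 1) s * f s := by
            have L : ∀ s' : S, stateDist ρ₀ P π T s' *
                ∑ p : A × S, π s' p.1 * P s' p.1 p.2 * f p.2
                = ∑ a : A, ∑ s : S, stateDist ρ₀ P π T s' * π s' a * P s' a s * f s := by
              intro s'
              rw [Fintype.sum_prod_type, Finset.mul_sum]
              refine Finset.sum_congr rfl fun a _ => ?_
              show stateDist ρ₀ P π T s' * ∑ y : S, π s' a * P s' a y * f y = _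
              rw [Finset.mul_sum]
              exact Finset.sum_congr rfl fun s _ => by ring
            have R : ∀ s : S, stateDist ρ₀ P π (T + 1) s * f s
                = ∑ s' : S, ∑ a : A, stateDist ρ₀ P π T s' * π s' a * P s' a s * f s := by
              intro s
              show (∑ s' : S, ∑ a : A, stateDist ρ₀ P π T s' * π s' a * P s' a s) * f s = _
              rw [Finset.sum_mul]
              exact Finset.sum_congr rfl fun s' _ => by rw [Finset.sum_mul]
            simp only [L, R]
            calc ∑ s' : S, ∑ a : A, ∑ s : S,
                    stateDist ρ₀ P π T s' * π s' a * P s' a s * f s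
                = ∑ s' : S, ∑ s : S, ∑ a : A,
                    stateDist ρ₀ P π T s' * π s' a * P s' a s * f s :=
                  Finset.sum_congr rfl fun s' _ => Finset.sum_comm
              _ = ∑ s : S, ∑ s' : S, ∑ a : A,
                    stateDist ρ₀ P π T s' * π s' a * P s' a s * f s := Finset.sum_comm

lemma sum_traj_steps (ρ₀ : S → ℝ) (P : S → A → S → ℝ) (π : S → A → ℝ)
    (hπsum : ∀ s, ∑ a, π s a = 1) (hPsum : ∀ s a, ∑ s', P s a s' = 1) :
    ∀ (T : ℕ) (g : S → A → ℝ),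
      ∑ τ : S × (Fin T → A × S), trajProb ρ₀ P π τ *
          (∑ t : Fin T, g (prevState τ t) ((τ.2 t).1))
        = ∑ t ∈ Finset.range T, ∑ s : S, stateDist ρ₀ P π t s * ∑ a : A, π s a * g s a
  | 0, g => by simp
  | T + 1, g => by
      rw [sum_traj_succ, Finset.sum_range_succ]
      have IH := sum_traj_steps ρ₀ P π hπsum hPsum T g
      have key : ∀ (τ : S × (Fin T → A × S)) (p : A × S),
          trajProb ρ₀ P π (extendTraj τ p) *
            (∑ t : Fin (T + 1), g (prevState (extendTraj τ p) t) (((extendTraj τ p).2 t).1))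
          = trajProb ρ₀ P π τ * (π (lastState τ) p.1 * P (lastState τ) p.1 p.2) *
              ((∑ t : Fin T, g (prevState τ t) ((τ.2 t).1)) + g (lastState τ) p.1) := by
        intro τ p
        rw [trajProb_extend, Fin.sum_univ_castSucc]
        congr 2
        · refine Finset.sum_congr rfl fun t _ => ?_
          rw [prevState_extend_castSucc]
          congr 2
          simp [extendTraj]
        · rw [prevState_extend_last]
          congr 2
          simp [extendTraj]
      calc ∑ τ : S × (Fin T → A × S), ∑ p : A × S,
              trajProb ρ₀ P π (extendTraj τ p) *
                (∑ t : Fin (T + 1), g (prevState (extendTraj τ p) t) (((extendTraj τ p).2 t).1))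
          = ∑ τ : S × (Fin T → A × S),
              (trajProb ρ₀ P π τ * (∑ t : Fin T, g (prevState τ t) ((τ.2 t).1))
                + trajProb ρ₀ P π τ * (∑ a : A, π (lastState τ) a * g (lastState τ) a)) := by
            refine Finset.sum_congr rfl fun τ _ => ?_
            simp only [key]
            have e1 : ∑ p : A × S, π (lastState τ) p.1 * P (lastState τ) p.1 p.2 = 1 := by
              rw [Fintype.sum_prod_type]
              simp only [← Finset.mul_sum, hPsum, mul_one, hπsum]
            have e2 : ∑ p : A × S,
                π (lastState τ) p.1 * P (lastState τ) p.1 p.2 * g (lastState τ) p.1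
                = ∑ a : A, π (lastState τ) a * g (lastState τ) a := by
              rw [Fintype.sum_prod_type]
              refine Finset.sum_congr rfl fun a _ => ?_
              show ∑ y : S, π (lastState τ) a * P (lastState τ) a y * g (lastState τ) a = _
              rw [← Finset.sum_mul, ← Finset.mul_sum, hPsum, mul_one]
            have step := Finset.sum_congr rfl (fun (p : A × S) (_ : p ∈ Finset.univ) => (by ring :
                trajProb ρ₀ P π τ * (π (lastState τ) p.1 * P (lastState τ) p.1 p.2) *
                  ((∑ t : Fin T, g (prevState τ t) ((τ.2 t).1)) + g (lastState τ) p.1)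
                = trajProb ρ₀ P π τ * (∑ t : Fin T, g (prevState τ t) ((τ.2 t).1)) *
                    (π (lastState τ) p.1 * P (lastState τ) p.1 p.2)
                  + trajProb ρ₀ P π τ *
                    (π (lastState τ) p.1 * P (lastState τ) p.1 p.2 * g (lastState τ) p.1)))
            rw [step, Finset.sum_add_distrib, ← Finset.mul_sum, ← Finset.mul_sum, e1, e2,
              mul_one]
        _ = _ := by
            rw [Finset.sum_add_distrib, IH,
              sum_traj_lastState ρ₀ P π T (fun s => ∑ a : A, π s a * g s a)]

lemma stateDist_nonneg' (ρ₀ : S → ℝ) (P : S → A → S → ℝ) (π : S → A → ℝ)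
    (hρ₀ : ∀ s, 0 ≤ ρ₀ s) (hP : ∀ s a s', 0 ≤ P s a s') (hπ : ∀ s a, 0 ≤ π s a) :
    ∀ (t : ℕ) (s : S), 0 ≤ stateDist ρ₀ P π t s
  | 0, s => hρ₀ s
  | t + 1, s => Finset.sum_nonneg fun s' _ => Finset.sum_nonneg fun a _ =>
      mul_nonneg (mul_nonneg (stateDist_nonneg' ρ₀ P π hρ₀ hP hπ t s') (hπ s' a)) (hP s' a s)

lemma trajProb_pos (ρ₀ : S → ℝ) (P : S → A → S → ℝ) (π : S → A → ℝ)
    (hρ₀ : ∀ s, 0 < ρ₀ s) (hP : ∀ s a s', 0 < P s a s') (hπ : ∀ s a, 0 < π s a)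
    {T : ℕ} (τ : S × (Fin T → A × S)) : 0 < trajProb ρ₀ P π τ :=
  mul_pos (hρ₀ _) (Finset.prod_pos fun t _ => mul_pos (hπ _ _) (hP _ _ _))

lemma log_traj_ratio (ρ₀ : S → ℝ) (P : S → A → S → ℝ) (π πstar : S → A → ℝ)
    (hρ₀ : ∀ s, 0 < ρ₀ s) (hP : ∀ s a s', 0 < P s a s')
    (hπ : ∀ s a, 0 < π s a) (hπstar : ∀ s a, 0 < πstar s a)
    {T : ℕ} (τ : S × (Fin T → A × S)) :
    Real.log (trajProb ρ₀ P π τ / trajProb ρ₀ P πstar τ)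
      = ∑ t : Fin T,
          Real.log (π (prevState τ t) ((τ.2 t).1) / πstar (prevState τ t) ((τ.2 t).1)) := by
  rw [Real.log_div (trajProb_pos ρ₀ P π hρ₀ hP hπ τ).ne'
    (trajProb_pos ρ₀ P πstar hρ₀ hP hπstar τ).ne']
  unfold trajProb
  rw [Real.log_mul (hρ₀ _).ne'
      (Finset.prod_pos fun t _ => mul_pos (hπ _ _) (hP _ _ _)).ne',
    Real.log_mul (hρ₀ _).ne'
      (Finset.prod_pos fun t _ => mul_pos (hπstar _ _) (hP _ _ _)).ne',
    Real.log_prod (fun t _ => (mul_pos (hπ _ _) (hP _ _ _)).ne'),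
    Real.log_prod (fun t _ => (mul_pos (hπstar _ _) (hP _ _ _)).ne')]
  have h1 : ∀ t : Fin T,
      Real.log (π (prevState τ t) ((τ.2 t).1) * P (prevState τ t) ((τ.2 t).1) ((τ.2 t).2))
      = Real.log (π (prevState τ t) ((τ.2 t).1))
        + Real.log (P (prevState τ t) ((τ.2 t).1) ((τ.2 t).2)) := fun t =>
    Real.log_mul (hπ _ _).ne' (hP _ _ _).ne'
  have h2 : ∀ t : Fin T,
      Real.log (πstar (prevState τ t) ((τ.2 t).1) * P (prevState τ t) ((τ.2 t).1) ((τ.2 t).2))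
      = Real.log (πstar (prevState τ t) ((τ.2 t).1))
        + Real.log (P (prevState τ t) ((τ.2 t).1) ((τ.2 t).2)) := fun t =>
    Real.log_mul (hπstar _ _).ne' (hP _ _ _).ne'
  have h3 : ∀ t : Fin T,
      Real.log (π (prevState τ t) ((τ.2 t).1) / πstar (prevState τ t) ((τ.2 t).1))
      = Real.log (π (prevState τ t) ((τ.2 t).1))
        - Real.log (πstar (prevState τ t) ((τ.2 t).1)) := fun t =>
    Real.log_div (hπ _ _).ne' (hπstar _ _).ne'
  simp only [h1, h2, h3, Finset.sum_add_distrib, Finset.sum_sub_distrib]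
  ring

end AuxRKL

/-- **Density-ratio upper bound on reverse KL.** The reverse KL divergence between
trajectory distributions is upper bounded by `T` times the expected density-ratio
excess on states induced by `π`. -/
theorem traj_rkl_le_density_ratio_excess
    {S A : Type*} [Fintype S] [Nonempty S] [Fintype A] [Nonempty A]
    (ρ₀ : S → ℝ) (hρ₀pos : ∀ s, 0 < ρ₀ s) (hρ₀sum : ∑ s, ρ₀ s = 1)
    (P : S → A → S → ℝ) (hPpos : ∀ s a s', 0 < P s a s')
    (hPsum : ∀ s a, ∑ s', P s a s' = 1)
    (T : ℕ) (hT : 1 ≤ T)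
    (π πstar : S → A → ℝ)
    (hπpos : ∀ s a, 0 < π s a) (hπsum : ∀ s, ∑ a, π s a = 1)
    (hπstarpos : ∀ s a, 0 < πstar s a) (hπstarsum : ∀ s, ∑ a, πstar s a = 1) :
    ∑ τ : S × (Fin T → A × S),
        trajProb ρ₀ P π τ * Real.log (trajProb ρ₀ P π τ / trajProb ρ₀ P πstar τ) ≤
      (T : ℝ) * ∑ s : S, avgStateDist ρ₀ P π T s *
        ∑ a : A, π s a * (π s a / πstar s a - 1) := by
  have hT0 : (T : ℝ) ≠ 0 := Nat.cast_ne_zero.mpr (by omega)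
  have hg : ∑ τ : S × (Fin T → A × S),
        trajProb ρ₀ P π τ * Real.log (trajProb ρ₀ P π τ / trajProb ρ₀ P πstar τ)
      = ∑ t ∈ Finset.range T, ∑ s : S, stateDist ρ₀ P π t s *
          ∑ a : A, π s a * Real.log (π s a / πstar s a) := by
    calc ∑ τ : S × (Fin T → A × S),
            trajProb ρ₀ P π τ * Real.log (trajProb ρ₀ P π τ / trajProb ρ₀ P πstar τ)
        = ∑ τ : S × (Fin T → A × S), trajProb ρ₀ P π τ *
            (∑ t : Fin T, Real.log (π (prevState τ t) ((τ.2 t).1) /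
              πstar (prevState τ t) ((τ.2 t).1))) :=
          Finset.sum_congr rfl fun τ _ => by
            rw [log_traj_ratio ρ₀ P π πstar hρ₀pos hPpos hπpos hπstarpos τ]
      _ = _ := sum_traj_steps ρ₀ P π hπsum hPsum T
          (fun s a => Real.log (π s a / πstar s a))
  have hRHS : (T : ℝ) * ∑ s : S, avgStateDist ρ₀ P π T s *
        ∑ a : A, π s a * (π s a / πstar s a - 1)
      = ∑ t ∈ Finset.range T, ∑ s : S, stateDist ρ₀ P π t s *
          ∑ a : A, π s a * (π s a / πstar s a - 1) := by
    calc (T : ℝ) * ∑ s : S, avgStateDist ρ₀ P π T s *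
            ∑ a : A, π s a * (π s a / πstar s a - 1)
        = ∑ s : S, (∑ t ∈ Finset.range T, stateDist ρ₀ P π t s) *
            ∑ a : A, π s a * (π s a / πstar s a - 1) := by
          rw [Finset.mul_sum]
          refine Finset.sum_congr rfl fun s _ => ?_
          unfold avgStateDist
          field_simp
      _ = ∑ s : S, ∑ t ∈ Finset.range T, stateDist ρ₀ P π t s *
            ∑ a : A, π s a * (π s a / πstar s a - 1) :=
          Finset.sum_congr rfl fun s _ => Finset.sum_mul _ _ _
      _ = _ := Finset.sum_comm
  rw [hg, hRHS]
  refine Finset.sum_le_sum fun t _ => Finset.sum_le_sum fun s _ => ?_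
  refine mul_le_mul_of_nonneg_left ?_
    (stateDist_nonneg' ρ₀ P π (fun s => (hρ₀pos s).le)
      (fun s a s' => (hPpos s a s').le) (fun s a => (hπpos s a).le) t s)
  refine Finset.sum_le_sum fun a _ => ?_
  exact mul_le_mul_of_nonneg_left
    (Real.log_le_sub_one_of_pos (div_pos (hπpos s a) (hπstarpos s a))) (hπpos s a).le


end
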